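/- The image of the Smarandache function S on A = F_q[t] is exactly the ideal tA; that is, S(A) = tA = { f ∈ A : t divides f } ∪ {0}. -/

import Mathlib

open Polynomial

variable {F : Type*} [Field F] [Fintype F] [DecidableEq F]

/-- `delta a f` is the natural number attached to the polynomial `f` via the
enumeration `a : Fin q ≃ F` of the field (`q = Fintype.card F`): if
`f = a_{i_0} + a_{i_1} t + ⋯ + a_{i_n} t^n` then `delta a f = i_0 + i_1 q + ⋯ + i_n q^n`.
In particular `delta a 0 = 0` whenever `a 0 = 0`. -/
noncomputable def delta (a : Fin (Fintype.card F) ≃ F) (f : F[X]) : ℕ :=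
  ∑ j ∈ Finset.range (f.natDegree + 1), (a.symm (f.coeff j) : ℕ) * Fintype.card F ^ j

/-- The inverse of `delta`: the polynomial whose `j`-th coefficient is the `j`-th
base-`q` digit of `m` (under the enumeration `a`). -/
noncomputable def deltaInv (a : Fin (Fintype.card F) ≃ F) (m : ℕ) : F[X] :=
  ∑ j ∈ Finset.range (m + 1),
    C (a ⟨m / Fintype.card F ^ j % Fintype.card F, Nat.mod_lt _ Fintype.card_pos⟩) * X ^ j

/-- The factorial of a polynomial: `f! = ∏_{g < f} (f - g)`, the product over all
polynomials `g` with `delta a g < delta a f`; in particular `0! = 1`. -/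
noncomputable def pfact (a : Fin (Fintype.card F) ≃ F) (f : F[X]) : F[X] :=
  ∏ m ∈ Finset.range (delta a f), (f - deltaInv a m)

/-- The Smarandache function: `S a 0 = 0`, and for `f ≠ 0`, `S a f` is the smallest
polynomial `g` (in the order given by `delta`) such that `f ∣ g!`. -/
noncomputable def S (a : Fin (Fintype.card F) ≃ F) (f : F[X]) : F[X] :=
  if f = 0 then 0 else deltaInv a (sInf {m : ℕ | f ∣ pfact a (deltaInv a m)})

section NatDigits
open Finset
lemma digit_sum_lt {q : ℕ} (hq : 1 < q) (d : ℕ → ℕ) (hd : ∀ i, d i < q) (N : ℕ) :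
    ∑ i ∈ range N, d i * q ^ i < q ^ N := by
  induction N with
  | zero => simp
  | succ N ih =>
    rw [Finset.sum_range_succ, pow_succ]
    have h1 : d N + 1 ≤ q := hd N
    calc ∑ i ∈ range N, d i * q ^ i + d N * q ^ N
        < q ^ N + d N * q ^ N := by omega
      _ = (d N + 1) * q ^ N := by ring
      _ ≤ q ^ N * q := by rw [mul_comm (q ^ N) q]; exact Nat.mul_le_mul_right _ h1

lemma digit_of_sum {q : ℕ} (hq : 1 < q) :
    ∀ (j N : ℕ) (d : ℕ → ℕ), (∀ i, d i < q) → j < N →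
      (∑ i ∈ range N, d i * q ^ i) / q ^ j % q = d j := by
  have hq0 : 0 < q := by omega
  intro j
  induction j with
  | zero =>
    intro N d hd hj
    obtain ⟨N, rfl⟩ := Nat.exists_eq_succ_of_ne_zero (by omega : N ≠ 0)
    rw [Finset.sum_range_succ']
    simp only [pow_zero, mul_one, Nat.div_one]
    have : ∀ i ∈ range N, d (i+1) * q ^ (i+1) = q * (d (i+1) * q ^ i) := by
      intro i _; ring
    rw [Finset.sum_congr rfl this, ← Finset.mul_sum, add_comm, Nat.add_mul_mod_self_left,
      Nat.mod_eq_of_lt (hd 0)]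
  | succ j ih =>
    intro N d hd hj
    obtain ⟨N, rfl⟩ := Nat.exists_eq_succ_of_ne_zero (by omega : N ≠ 0)
    rw [Finset.sum_range_succ']
    simp only [pow_zero, mul_one]
    have h2 : ∀ i ∈ range N, d (i+1) * q ^ (i+1) = q * (d (i+1) * q ^ i) := by
      intro i _; ring
    rw [Finset.sum_congr rfl h2, ← Finset.mul_sum, pow_succ', ← Nat.div_div_eq_div_mul]
    rw [add_comm, Nat.add_mul_div_left _ _ hq0, Nat.div_eq_of_lt (hd 0), zero_add]
    exact ih N (fun i => d (i+1)) (fun i => hd (i+1)) (by omega)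

lemma sum_digits {q : ℕ} (hq : 1 < q) :
    ∀ (N m : ℕ), m < q ^ N → ∑ j ∈ range N, (m / q ^ j % q) * q ^ j = m := by
  have hq0 : 0 < q := by omega
  intro N
  induction N with
  | zero => intro m hm; simp only [pow_zero] at hm; interval_cases m; simp
  | succ N ih =>
    intro m hm
    rw [Finset.sum_range_succ']
    simp only [pow_zero, mul_one, Nat.div_one]
    have h1 : ∀ j ∈ range N, m / q ^ (j+1) % q * q ^ (j+1) = (m / q / q ^ j % q * q ^ j) * q := by
      intro j _
      rw [pow_succ', ← Nat.div_div_eq_div_mul]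
      ring
    rw [Finset.sum_congr rfl h1, ← Finset.sum_mul]
    have h2 : m / q < q ^ N := by
      rw [Nat.div_lt_iff_lt_mul hq0, ← pow_succ]; exact hm
    rw [ih (m / q) h2, mul_comm, Nat.div_add_mod]



variable {F : Type*} [Field F] [Fintype F] [DecidableEq F]
end NatDigits

section Lemmas
variable (a : Fin (Fintype.card F) ≃ F) (h0 : a 0 = 0)

lemma hq1 : 1 < Fintype.card F := Fintype.one_lt_card

include h0 in
lemma coeff_deltaInv (m k : ℕ) :
    (deltaInv a m).coeff k
      = a ⟨m / Fintype.card F ^ k % Fintype.card F, Nat.mod_lt _ Fintype.card_pos⟩ := by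
  classical
  rw [deltaInv, Polynomial.finset_sum_coeff]
  simp only [coeff_C_mul, coeff_X_pow, mul_ite, mul_one, mul_zero]
  rw [Finset.sum_ite_eq (Finset.range (m+1))]
  by_cases hk : k ∈ Finset.range (m + 1)
  · simp [hk]
  · simp only [hk, if_false]
    have hk' : m < Fintype.card F ^ k := by
      have := Nat.lt_pow_self (n := k) (hq1 (F := F))
      simp only [Finset.mem_range] at hk
      omega
    have : m / Fintype.card F ^ k = 0 := Nat.div_eq_of_lt hk'
    rw [eq_comm, ← h0]
    congr 1
    apply Fin.ext
    simp [this]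

include h0 in
lemma delta_extend (f : F[X]) (N : ℕ) (hN : f.natDegree + 1 ≤ N) :
    delta a f = ∑ j ∈ Finset.range N, (a.symm (f.coeff j) : ℕ) * Fintype.card F ^ j := by
  rw [delta]
  apply Finset.sum_subset (Finset.range_subset_range.mpr hN)
  intro j _ hj
  simp only [Finset.mem_range, not_lt] at hj
  rw [Polynomial.coeff_eq_zero_of_natDegree_lt (by omega), ← h0, Equiv.symm_apply_apply]
  simp

include h0 in
lemma delta_deltaInv (m : ℕ) : delta a (deltaInv a m) = m := by
  have hq := hq1 (F := F)
  set N := (deltaInv a m).natDegree + 1 + m with hN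
  rw [delta_extend a h0 _ N (by omega)]
  have : ∀ j ∈ Finset.range N, (a.symm ((deltaInv a m).coeff j) : ℕ) * Fintype.card F ^ j
      = (m / Fintype.card F ^ j % Fintype.card F) * Fintype.card F ^ j := by
    intro j _
    rw [coeff_deltaInv a h0, Equiv.symm_apply_apply]
  rw [Finset.sum_congr rfl this]
  exact sum_digits (hq1) N m (lt_of_lt_of_le (by omega)
    (Nat.le_of_lt (Nat.lt_pow_self (n := N) (hq1))))

include h0 in
lemma deltaInv_delta (f : F[X]) : deltaInv a (delta a f) = f := by
  have hq := hq1 (F := F)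
  ext k
  rw [coeff_deltaInv a h0]
  set N := f.natDegree + 1 with hNdef
  have hdig : ∀ i, (a.symm (f.coeff i) : ℕ) < Fintype.card F := fun i => (a.symm (f.coeff i)).isLt
  by_cases hk : k < N
  · rw [Equiv.apply_eq_iff_eq_symm_apply]
    apply Fin.ext
    have hdg := digit_of_sum hq k N (fun i => (a.symm (f.coeff i) : ℕ)) hdig hk
    rw [delta, ← hNdef]
    exact hdg
  · have hlt : delta a f < Fintype.card F ^ N := digit_sum_lt (hq1) _ hdig N
    have hz : delta a f / Fintype.card F ^ k = 0 := by
      apply Nat.div_eq_of_lt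
      exact lt_of_lt_of_le hlt (Nat.pow_le_pow_right (by omega) (by omega))
    rw [Polynomial.coeff_eq_zero_of_natDegree_lt (by omega), ← h0]
    congr 1
    apply Fin.ext
    simp [hz]


include h0 in
lemma delta_zero' : delta a (0 : F[X]) = 0 := by
  have hs : a.symm 0 = 0 := by rw [← h0, Equiv.symm_apply_apply]
  simp [delta, hs]

include h0 in
lemma deltaInv_zero : deltaInv a 0 = 0 := by
  have := deltaInv_delta a h0 (0 : F[X])
  rwa [delta_zero' a h0] at this

include h0 in
lemma delta_pos {f : F[X]} (hf : f ≠ 0) : 0 < delta a f := by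
  rcases Nat.eq_zero_or_pos (delta a f) with h | h
  · exfalso
    apply hf
    have := deltaInv_delta a h0 f
    rw [h, deltaInv_zero a h0] at this
    exact this.symm
  · exact h

include h0 in
lemma deltaInv_sub_ne_zero {m n : ℕ} (h : m ≠ n) : deltaInv a m - deltaInv a n ≠ 0 := by
  rw [sub_ne_zero]
  intro he
  apply h
  rw [← delta_deltaInv a h0 m, ← delta_deltaInv a h0 n, he]

include h0 in
lemma pfact_ne_zero (f : F[X]) : pfact a f ≠ 0 := by
  rw [pfact]
  apply Finset.prod_ne_zero_iff.mpr
  intro m hm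
  simp only [Finset.mem_range] at hm
  rw [← deltaInv_delta a h0 f]
  exact deltaInv_sub_ne_zero a h0 (by omega)

include h0 in
lemma self_dvd_pfact {f : F[X]} (hf : f ≠ 0) : f ∣ pfact a f := by
  have h : (0:ℕ) ∈ Finset.range (delta a f) := by
    simp [delta_pos a h0 hf]
  have := Finset.dvd_prod_of_mem (fun m => f - deltaInv a m) h
  simpa [pfact, deltaInv_zero a h0] using this

include h0 in
lemma deltaInv_mul_add (b : ℕ) (s : Fin (Fintype.card F)) :
    deltaInv a (Fintype.card F * b + (s : ℕ)) = C (a s) + X * deltaInv a b := by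
  have hq := hq1 (F := F)
  have hq0 : 0 < Fintype.card F := by omega
  ext k
  rw [coeff_deltaInv a h0]
  cases k with
  | zero =>
    rw [coeff_add, coeff_C, if_pos rfl]
    have hX : (X * deltaInv a b).coeff 0 = 0 := by
      rw [mul_comm, Polynomial.coeff_mul_X_zero]
    rw [hX, add_zero]
    congr 1
    apply Fin.ext
    simp only [pow_zero, Nat.div_one]
    rw [Nat.mul_add_mod]
    exact Nat.mod_eq_of_lt s.isLt
  | succ k =>
    rw [coeff_add, coeff_C, if_neg (by omega), zero_add,
      Polynomial.coeff_X_mul, coeff_deltaInv a h0]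
    congr 1
    apply Fin.ext
    simp only
    congr 1
    rw [pow_succ', ← Nat.div_div_eq_div_mul]
    congr 1
    rw [Nat.mul_add_div hq0, Nat.div_eq_of_lt s.isLt, add_zero]

include h0 in
lemma block_prod (p : F[X]) (y : F) (c : ℕ) :
    ∏ s ∈ Finset.range (Fintype.card F), (p + C y - deltaInv a (Fintype.card F * c + s))
      = ∏ x : F, (p - X * deltaInv a c - C x) := by
  rw [← Fin.prod_univ_eq_prod_range (fun s => p + C y - deltaInv a (Fintype.card F * c + s))]
  have key : ∀ s : Fin (Fintype.card F), p + C y - deltaInv a (Fintype.card F * c + (s:ℕ))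
      = p - X * deltaInv a c - C (a s - y) := by
    intro s
    rw [deltaInv_mul_add a h0, map_sub]
    ring
  rw [Finset.prod_congr rfl (fun s _ => key s)]
  exact Fintype.prod_equiv (a.trans (Equiv.subRight y)) _ _ (fun s => rfl)

include h0 in
lemma pfact_block_aux (p : F[X]) (y : F) (b : ℕ) :
    ∏ m ∈ Finset.range (Fintype.card F * b), (p + C y - deltaInv a m)
      = ∏ c ∈ Finset.range b, ∏ x : F, (p - X * deltaInv a c - C x) := by
  induction b with
  | zero => simp
  | succ b ih =>
    rw [Nat.mul_succ, Finset.prod_range_add, ih, Finset.prod_range_succ]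
    congr 1
    exact block_prod a h0 p y b

include h0 in
lemma pfact_q_mul (b : ℕ) :
    pfact a (deltaInv a (Fintype.card F * b))
      = ∏ c ∈ Finset.range b, ∏ x : F, (X * deltaInv a b - X * deltaInv a c - C x) := by
  rw [pfact, delta_deltaInv a h0]
  have e1 : ∀ m ∈ Finset.range (Fintype.card F * b),
      deltaInv a (Fintype.card F * b) - deltaInv a m
        = X * deltaInv a b + C (0:F) - deltaInv a m := by
    intro m _
    have := deltaInv_mul_add a h0 b 0
    simp only [Fin.val_zero, add_zero, h0, map_zero, zero_add] at this ⊢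
    rw [this]
  rw [Finset.prod_congr rfl e1, pfact_block_aux a h0]

include h0 in
lemma pfact_unit (b : ℕ) (r : Fin (Fintype.card F)) :
    ∃ u : F, u ≠ 0 ∧ pfact a (deltaInv a (Fintype.card F * b + (r:ℕ)))
      = C u * pfact a (deltaInv a (Fintype.card F * b)) := by
  have hq0 : 0 < Fintype.card F := Fintype.card_pos
  refine ⟨∏ i ∈ Finset.range (r:ℕ), (a r - a ⟨i % Fintype.card F, Nat.mod_lt _ hq0⟩), ?_, ?_⟩
  · apply Finset.prod_ne_zero_iff.mpr
    intro i hi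
    simp only [Finset.mem_range] at hi
    rw [sub_ne_zero]
    intro he
    have := a.injective he
    have := congrArg Fin.val this
    simp only at this
    rw [Nat.mod_eq_of_lt (lt_trans hi r.isLt)] at this
    omega
  · rw [pfact, pfact, delta_deltaInv a h0, delta_deltaInv a h0, Finset.prod_range_add]
    have e2 : ∀ i ∈ Finset.range (r:ℕ),
        deltaInv a (Fintype.card F * b + (r:ℕ)) - deltaInv a (Fintype.card F * b + i)
          = C (a r - a ⟨i % Fintype.card F, Nat.mod_lt _ hq0⟩) := by
      intro i hi
      simp only [Finset.mem_range] at hi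
      have hi' : i % Fintype.card F = i := Nat.mod_eq_of_lt (lt_trans hi r.isLt)
      have hrep : Fintype.card F * b + i
          = Fintype.card F * b + ((⟨i % Fintype.card F, Nat.mod_lt _ hq0⟩ :
              Fin (Fintype.card F)) : ℕ) := by simp [hi']
      rw [hrep, deltaInv_mul_add a h0, deltaInv_mul_add a h0, map_sub]
      ring
    rw [Finset.prod_congr rfl e2, ← map_prod]
    have e3 : ∀ m ∈ Finset.range (Fintype.card F * b),
        deltaInv a (Fintype.card F * b + (r:ℕ)) - deltaInv a m
          = X * deltaInv a b + C (a r) - deltaInv a m := by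
      intro m _
      rw [deltaInv_mul_add a h0]
      ring
    have e4 : ∀ m ∈ Finset.range (Fintype.card F * b),
        deltaInv a (Fintype.card F * b) - deltaInv a m
          = X * deltaInv a b + C (0:F) - deltaInv a m := by
      intro m _
      have := deltaInv_mul_add a h0 b 0
      simp only [Fin.val_zero, add_zero, h0, map_zero, zero_add] at this ⊢
      rw [this]
    rw [Finset.prod_congr rfl e3, Finset.prod_congr rfl e4,
      pfact_block_aux a h0, pfact_block_aux a h0, mul_comm]


include h0 in
lemma natDegree_pfact (n : ℕ) :
    (pfact a (deltaInv a n)).natDegree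
      = ∑ m ∈ Finset.range n, (deltaInv a n - deltaInv a m).natDegree := by
  rw [pfact, delta_deltaInv a h0]
  exact natDegree_prod _ _ (fun m hm => deltaInv_sub_ne_zero a h0
    (by simp only [Finset.mem_range] at hm; omega))

include h0 in
lemma D_rec (b : ℕ) :
    (pfact a (deltaInv a (Fintype.card F * b))).natDegree
      = Fintype.card F * b + Fintype.card F * (pfact a (deltaInv a b)).natDegree := by
  rw [pfact_q_mul a h0]
  have hfac : ∀ c ∈ Finset.range b, ∀ x : F,
      (X * deltaInv a b - X * deltaInv a c - C x).natDegree
        = (deltaInv a b - deltaInv a c).natDegree + 1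
      ∧ X * deltaInv a b - X * deltaInv a c - C x ≠ 0 := by
    intro c hc x
    simp only [Finset.mem_range] at hc
    have hd : deltaInv a b - deltaInv a c ≠ 0 := deltaInv_sub_ne_zero a h0 (by omega)
    have e : X * deltaInv a b - X * deltaInv a c - C x
        = X * (deltaInv a b - deltaInv a c) - C x := by ring
    have hdeg : (X * (deltaInv a b - deltaInv a c) - C x).natDegree
        = (deltaInv a b - deltaInv a c).natDegree + 1 := by
      rw [natDegree_sub_C, natDegree_X_mul hd]
    refine ⟨by rw [e, hdeg], ?_⟩
    rw [e]
    intro hz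
    rw [hz, natDegree_zero] at hdeg
    omega
  rw [natDegree_prod _ _ (fun c hc => Finset.prod_ne_zero_iff.mpr (fun x _ => (hfac c hc x).2))]
  have h1 : ∀ c ∈ Finset.range b,
      (∏ x : F, (X * deltaInv a b - X * deltaInv a c - C x)).natDegree
        = Fintype.card F * (deltaInv a b - deltaInv a c).natDegree + Fintype.card F := by
    intro c hc
    rw [natDegree_prod _ _ (fun x _ => (hfac c hc x).2),
      Finset.sum_congr rfl (fun x _ => (hfac c hc x).1), Finset.sum_const,
      Finset.card_univ, smul_eq_mul]
    ring
  rw [Finset.sum_congr rfl h1, Finset.sum_add_distrib, Finset.sum_const, Finset.card_range,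
    smul_eq_mul, ← Finset.mul_sum, ← natDegree_pfact a h0 b]
  ring

include h0 in
lemma D_block (b : ℕ) (r : Fin (Fintype.card F)) :
    (pfact a (deltaInv a (Fintype.card F * b + (r:ℕ)))).natDegree
      = (pfact a (deltaInv a (Fintype.card F * b))).natDegree := by
  obtain ⟨u, hu, h⟩ := pfact_unit a h0 b r
  rw [h, natDegree_C_mul hu]

include h0 in
lemma D_reduce (m : ℕ) :
    (pfact a (deltaInv a m)).natDegree
      = (pfact a (deltaInv a (Fintype.card F * (m / Fintype.card F)))).natDegree := by
  conv_lhs => rw [← Nat.div_add_mod m (Fintype.card F)]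
  exact D_block a h0 (m / Fintype.card F) ⟨m % Fintype.card F, Nat.mod_lt _ Fintype.card_pos⟩

include h0 in
lemma D_mono : ∀ n m : ℕ, m ≤ n →
    (pfact a (deltaInv a m)).natDegree ≤ (pfact a (deltaInv a n)).natDegree := by
  have hq := hq1 (F := F)
  intro n
  induction n using Nat.strong_induction_on with
  | _ n ih =>
    intro m hmn
    rcases Nat.eq_zero_or_pos n with rfl | hn
    · have hm0 : m = 0 := by omega
      subst hm0; exact le_refl _
    · rw [D_reduce a h0 m, D_reduce a h0 n, D_rec a h0, D_rec a h0]
      have h1 : m / Fintype.card F ≤ n / Fintype.card F := Nat.div_le_div_right hmn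
      have h2 : (pfact a (deltaInv a (m / Fintype.card F))).natDegree
          ≤ (pfact a (deltaInv a (n / Fintype.card F))).natDegree :=
        ih (n / Fintype.card F) (Nat.div_lt_self hn hq) _ h1
      exact Nat.add_le_add (Nat.mul_le_mul_left _ h1) (Nat.mul_le_mul_left _ h2)

include h0 in
lemma D_strict (B m : ℕ) (hm : m < Fintype.card F * B) :
    (pfact a (deltaInv a m)).natDegree
      < (pfact a (deltaInv a (Fintype.card F * B))).natDegree := by
  have hq := hq1 (F := F)
  rw [D_reduce a h0 m, D_rec a h0, D_rec a h0]
  have h1 : m / Fintype.card F < B := by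
    rw [Nat.div_lt_iff_lt_mul (by omega : 0 < Fintype.card F)]
    exact lt_of_lt_of_le hm (le_of_eq (mul_comm _ _))
  have h2 : (pfact a (deltaInv a (m / Fintype.card F))).natDegree
      ≤ (pfact a (deltaInv a B)).natDegree := D_mono a h0 B _ (by omega)
  have h3 : Fintype.card F * (m / Fintype.card F) + Fintype.card F ≤ Fintype.card F * B := by
    have := Nat.mul_le_mul_left (Fintype.card F) (show m / Fintype.card F + 1 ≤ B by omega)
    rw [Nat.mul_add, Nat.mul_one] at this
    exact this
  have h4 : Fintype.card F * (pfact a (deltaInv a (m / Fintype.card F))).natDegree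
      ≤ Fintype.card F * (pfact a (deltaInv a B)).natDegree := Nat.mul_le_mul_left _ h2
  omega

include h0 in
lemma X_dvd_deltaInv (n : ℕ) : X ∣ deltaInv a n ↔ n % Fintype.card F = 0 := by
  rw [Polynomial.X_dvd_iff, coeff_deltaInv a h0]
  simp only [pow_zero, Nat.div_one]
  constructor
  · intro h
    have h2 := a.injective (h.trans h0.symm)
    have h3 := congrArg Fin.val h2
    simpa using h3
  · intro h
    rw [← h0]
    congr 1
    apply Fin.ext
    simp [h]

end Lemmas

/-- Proposition 3.7: the image of the Smarandache function is exactly `t·A`. -/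
theorem smarandache_range (a : Fin (Fintype.card F) ≃ F) (h0 : a 0 = 0) (h1 : a 1 = 1) :
    Set.range (S a) = {f : F[X] | X ∣ f} := by
  have hq := hq1 (F := F)
  ext g
  simp only [Set.mem_range, Set.mem_setOf_eq]
  constructor
  · rintro ⟨f, rfl⟩
    by_cases hf : f = 0
    · simp [S, hf]
    · rw [S, if_neg hf]
      have hne : {m : ℕ | f ∣ pfact a (deltaInv a m)}.Nonempty := ⟨delta a f, by
        simp only [Set.mem_setOf_eq, deltaInv_delta a h0]
        exact self_dvd_pfact a h0 hf⟩
      have hmem : sInf {m : ℕ | f ∣ pfact a (deltaInv a m)}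
          ∈ {m : ℕ | f ∣ pfact a (deltaInv a m)} := Nat.sInf_mem hne
      rw [X_dvd_deltaInv a h0]
      set n := sInf {m : ℕ | f ∣ pfact a (deltaInv a m)} with hn
      by_contra hr
      have hrep : Fintype.card F * (n / Fintype.card F)
          + ((⟨n % Fintype.card F, Nat.mod_lt _ Fintype.card_pos⟩ :
              Fin (Fintype.card F)) : ℕ) = n := Nat.div_add_mod n _
      obtain ⟨u, hu, he⟩ := pfact_unit a h0 (n / Fintype.card F)
        ⟨n % Fintype.card F, Nat.mod_lt _ Fintype.card_pos⟩
      rw [hrep] at he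
      have hmem' : Fintype.card F * (n / Fintype.card F)
          ∈ {m : ℕ | f ∣ pfact a (deltaInv a m)} := by
        simp only [Set.mem_setOf_eq] at hmem ⊢
        rw [he] at hmem
        exact ((isUnit_C.mpr hu.isUnit).dvd_mul_left).mp hmem
      have hle : n ≤ Fintype.card F * (n / Fintype.card F) := Nat.sInf_le hmem'
      have hdm := Nat.div_add_mod n (Fintype.card F)
      omega
  · intro hg
    by_cases hgz : g = 0
    · exact ⟨0, by simp [S, hgz]⟩
    · refine ⟨pfact a g, ?_⟩
      have hfz : pfact a g ≠ 0 := pfact_ne_zero a h0 g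
      rw [S, if_neg hfz]
      have hmemg : delta a g ∈ {m : ℕ | pfact a g ∣ pfact a (deltaInv a m)} := by
        simp only [Set.mem_setOf_eq, deltaInv_delta a h0]
        exact dvd_rfl
      have hlow : ∀ m ∈ {m : ℕ | pfact a g ∣ pfact a (deltaInv a m)}, delta a g ≤ m := by
        intro m hm
        by_contra hlt
        push_neg at hlt
        have hmod : delta a g % Fintype.card F = 0 := by
          rw [← X_dvd_deltaInv a h0, deltaInv_delta a h0]; exact hg
        have hrepg : Fintype.card F * (delta a g / Fintype.card F) = delta a g := by
          have := Nat.div_add_mod (delta a g) (Fintype.card F); omega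
        have hstrict := D_strict a h0 (delta a g / Fintype.card F) m
          (by rw [hrepg]; exact hlt)
        rw [hrepg, deltaInv_delta a h0] at hstrict
        have hle := Polynomial.natDegree_le_of_dvd hm (pfact_ne_zero a h0 _)
        omega
      have hinf : sInf {m : ℕ | pfact a g ∣ pfact a (deltaInv a m)} = delta a g :=
        le_antisymm (Nat.sInf_le hmemg) (hlow _ (Nat.sInf_mem ⟨_, hmemg⟩))
      rw [hinf, deltaInv_delta a h0]
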